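/- arXiv:1408.3779 — 9 statements merged into one kernel-verified Lean document; each statement's English description precedes it below -/
import Mathlib

section
/- Let q : ℝ → ℝ be twice differentiable with q''(t) = 2 q(t)^3 + t q(t) and q(t) ≠ 0 for all t. Then r(t) = -q'(t)/q(t) satisfies r''(t) = 2 r(t)^3 - 2 t r(t) - 1. -/
/-! Since `q'' / q = 2q² + t`, the quotient rule gives the Riccati equation `r' = r² - 2q² - t`.
Differentiating once more and using `q' = -r q` to rewrite `(q²)' = -2 r q²`, the `q²` terms cancel
and leave `r'' = 2r³ - 2tr - 1`. -/

section
variable {q q' q'' : ℝ → ℝ} {t : ℝ}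

theorem hasDerivAt_neg_div_of_hasDerivAt (hq : HasDerivAt q (q' t) t)
    (hq' : HasDerivAt q' (q'' t) t) (hne : q t ≠ 0) :
    HasDerivAt (fun s => -(q' s / q s)) ((q' t / q t) ^ 2 - q'' t / q t) t := by
  have h : HasDerivAt (fun s => -(q' s / q s)) (-((q'' t * q t - q' t * q' t) / q t ^ 2)) t :=
    (hq'.div hq hne).neg
  convert h using 1
  field_simp
  ring

theorem hasDerivAt_neg_div_of_painleveII (hq : HasDerivAt q (q' t) t)
    (hq' : HasDerivAt q' (q'' t) t) (hPII : q'' t = 2 * q t ^ 3 + t * q t) (hne : q t ≠ 0) :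
    HasDerivAt (fun s => -(q' s / q s)) ((q' t / q t) ^ 2 - 2 * q t ^ 2 - t) t := by
  convert hasDerivAt_neg_div_of_hasDerivAt hq hq' hne using 1
  rw [hPII]
  field_simp
  ring

end

/-- If `q` is a nonvanishing solution of `q'' = 2q³ + tq`, then `r = -q'/q`
satisfies `r'' = 2r³ - 2tr - 1`. -/
theorem stmt_1 (q q' q'' : ℝ → ℝ)
    (hq : ∀ t, HasDerivAt q (q' t) t)
    (hq' : ∀ t, HasDerivAt q' (q'' t) t)
    (hPII : ∀ t, q'' t = 2 * q t ^ 3 + t * q t)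
    (hne : ∀ t, q t ≠ 0) :
    ∀ t, deriv (deriv (fun s => -(q' s / q s))) t =
      2 * (-(q' t / q t)) ^ 3 - 2 * t * (-(q' t / q t)) - 1 := by
  intro t
  have hr s := hasDerivAt_neg_div_of_painleveII (hq s) (hq' s) (hPII s) (hne s)
  have riccati : deriv (fun s => -(q' s / q s)) = fun s => (q' s / q s) ^ 2 - 2 * q s ^ 2 - s :=
    funext fun s => (hr s).deriv
  have hr' : HasDerivAt (fun s => (-(q' s / q s)) ^ 2 - 2 * q s ^ 2 - s)
      ((2 : ℕ) * (-(q' t / q t)) ^ 1 * ((q' t / q t) ^ 2 - 2 * q t ^ 2 - t)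
        - 2 * ((2 : ℕ) * q t ^ 1 * q' t) - 1) t :=
    (((hr t).pow 2).sub (((hq t).pow 2).const_mul 2)).sub (hasDerivAt_id t)
  simp only [neg_sq] at hr'
  rw [riccati, hr'.deriv]
  field_simp [hne t]
  ring
end

section
/- Let q : ℝ → ℝ be twice differentiable with q''(t) = 2 q(t)^3 + t q(t), and set P(t) = 2 q(t)^2 + 2 q'(t) + t. Then 2 P(t) P''(t) - (P'(t))^2 = 2 P(t)^2 (P(t) - t) - 1 for all t. -/
/-!
For a solution `q` of Painlevé II, `P = 2q² + 2q' + t` satisfies the Riccati-type equation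
`P' = 2qP + 1`, because `2q'' = 4q³ + 2tq = 2q(P - 2q')`. Differentiating once more gives
`P'' = 2q'P + 2qP'`, and substituting `P' = 2qP + 1` turns `2PP'' - P'²` into
`4(q² + q')P² - 1 = 2P²(P - t) - 1`.
-/

def painleveP (q q' : ℝ → ℝ) (t : ℝ) : ℝ := 2 * q t ^ 2 + 2 * q' t + t

theorem hasDerivAt_painleveP {q q' : ℝ → ℝ} {t : ℝ} (hq : HasDerivAt q (q' t) t)
    (hq' : HasDerivAt q' (2 * q t ^ 3 + t * q t) t) :
    HasDerivAt (painleveP q q') (2 * q t * painleveP q q' t + 1) t := by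
  refine ((((hq.pow 2).const_mul 2).add (hq'.const_mul 2)).add (hasDerivAt_id t)).congr_deriv ?_
  rw [painleveP]
  push_cast
  ring

theorem deriv_painleveP {q q' : ℝ → ℝ} (hq : ∀ t, HasDerivAt q (q' t) t)
    (hq' : ∀ t, HasDerivAt q' (2 * q t ^ 3 + t * q t) t) :
    deriv (painleveP q q') = fun t => 2 * q t * painleveP q q' t + 1 :=
  funext fun t => (hasDerivAt_painleveP (hq t) (hq' t)).deriv

theorem hasDerivAt_deriv_painleveP {q q' : ℝ → ℝ} (hq : ∀ t, HasDerivAt q (q' t) t)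
    (hq' : ∀ t, HasDerivAt q' (2 * q t ^ 3 + t * q t) t) (t : ℝ) :
    HasDerivAt (deriv (painleveP q q'))
      (2 * q' t * painleveP q q' t + 2 * q t * (2 * q t * painleveP q q' t + 1)) t := by
  rw [deriv_painleveP hq hq']
  exact (((hq t).const_mul 2).mul (hasDerivAt_painleveP (hq t) (hq' t))).add_const 1

/-- If `q` solves `q'' = 2q³ + tq` and `P = 2q² + 2q' + t`, then
`2PP'' - (P')² = 2P²(P - t) - 1`. -/
theorem stmt_2 (q q' q'' : ℝ → ℝ)
    (hq : ∀ t, HasDerivAt q (q' t) t)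
    (hq' : ∀ t, HasDerivAt q' (q'' t) t)
    (hPII : ∀ t, q'' t = 2 * q t ^ 3 + t * q t) :
    ∀ t, 2 * (2 * q t ^ 2 + 2 * q' t + t) *
        deriv (deriv (fun s => 2 * q s ^ 2 + 2 * q' s + s)) t
      - (deriv (fun s => 2 * q s ^ 2 + 2 * q' s + s) t) ^ 2
      = 2 * (2 * q t ^ 2 + 2 * q' t + t) ^ 2 * ((2 * q t ^ 2 + 2 * q' t + t) - t) - 1 := by
  intro t
  have hq'' : ∀ s, HasDerivAt q' (2 * q s ^ 3 + s * q s) s := fun s => hPII s ▸ hq' s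
  change 2 * painleveP q q' t * deriv (deriv (painleveP q q')) t
      - deriv (painleveP q q') t ^ 2 = 2 * painleveP q q' t ^ 2 * (painleveP q q' t - t) - 1
  rw [(hasDerivAt_deriv_painleveP hq hq'' t).deriv, (hasDerivAt_painleveP (hq t) (hq'' t)).deriv]
  simp only [painleveP]
  ring
end

section
/- Let q be twice differentiable with q''(t) = 2q(t)^3 + tq(t), q nonvanishing, g = q^2, u = (q')^2 - tg - g^2, u nonvanishing. Then (g/u)''(t) = 3 g(t) g'(t)/u(t)^2 + 2 (g(t)/u(t))^3 + 6 g(t)^2/u(t) + 4 t g(t)/u(t) + 2 for all t. -/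
/-!
With `f = g/u`, the Hamiltonian identity `u' = -g` gives `f' = g'/u + f²` and hence
`f'' = g''/u + 3gg'/u² + 2f³`. For `g = q²` Painlevé II gives
`g'' = 2q'² + 2qq'' = 2u + 6g² + 4tg`, which turns `g''/u` into `2 + 6g²/u + 4tg/u`.
-/

section QuotientByAntiderivative

variable {g g₁ u : ℝ → ℝ}

theorem hasDerivAt_div_of_hasDerivAt_neg {t : ℝ} (hg : HasDerivAt g (g₁ t) t)
    (hu : HasDerivAt u (-g t) t) (hut : u t ≠ 0) :
    HasDerivAt (fun s => g s / u s) (g₁ t / u t + (g t / u t) ^ 2) t :=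
  (hg.div hu hut).congr_deriv (by field_simp; ring)

theorem deriv_deriv_div_of_hasDerivAt_neg (hg : ∀ s, HasDerivAt g (g₁ s) s)
    (hu : ∀ s, HasDerivAt u (-g s) s) (hune : ∀ s, u s ≠ 0) {t g₂ : ℝ}
    (hg₁ : HasDerivAt g₁ g₂ t) :
    deriv (deriv fun s => g s / u s) t
      = g₂ / u t + 3 * g t * g₁ t / u t ^ 2 + 2 * (g t / u t) ^ 3 := by
  have hf : deriv (fun s => g s / u s) = fun s => g₁ s / u s + (g s / u s) ^ 2 :=
    funext fun s => (hasDerivAt_div_of_hasDerivAt_neg (hg s) (hu s) (hune s)).deriv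
  have hf' := (hg₁.fun_div (hu t) (hune t)).fun_add
    ((hasDerivAt_div_of_hasDerivAt_neg (hg t) (hu t) (hune t)).fun_pow 2)
  rw [hf, hf'.deriv]
  push_cast
  have hut := hune t
  field_simp
  ring

end QuotientByAntiderivative

section PainleveII

variable {q q' q'' : ℝ → ℝ}

def painleveIIHamiltonian (q q' : ℝ → ℝ) (t : ℝ) : ℝ :=
  q' t ^ 2 - t * q t ^ 2 - (q t ^ 2) ^ 2

theorem hasDerivAt_sq_of_hasDerivAt {t : ℝ} (hq : HasDerivAt q (q' t) t) :
    HasDerivAt (fun s => q s ^ 2) (2 * q t * q' t) t :=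
  (hq.fun_pow 2).congr_deriv (by ring)

theorem hasDerivAt_painleveIIHamiltonian {t : ℝ} (hq : HasDerivAt q (q' t) t)
    (hq' : HasDerivAt q' (q'' t) t) (hPII : q'' t = 2 * q t ^ 3 + t * q t) :
    HasDerivAt (painleveIIHamiltonian q q') (-q t ^ 2) t := by
  have hg := hasDerivAt_sq_of_hasDerivAt hq
  refine (((hq'.fun_pow 2).fun_sub ((hasDerivAt_id' t).fun_mul hg)).fun_sub
    (hg.fun_pow 2)).congr_deriv ?_
  rw [hPII]
  ring

end PainleveII

theorem stmt_7_general (q q' q'' : ℝ → ℝ)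
    (hq : ∀ t, HasDerivAt q (q' t) t)
    (hq' : ∀ t, HasDerivAt q' (q'' t) t)
    (hPII : ∀ t, q'' t = 2 * q t ^ 3 + t * q t)
    (hune : ∀ t, q' t ^ 2 - t * q t ^ 2 - (q t ^ 2) ^ 2 ≠ 0) :
    ∀ t, deriv (deriv (fun s => q s ^ 2 / (q' s ^ 2 - s * q s ^ 2 - (q s ^ 2) ^ 2))) t
      = 3 * q t ^ 2 * deriv (fun s => q s ^ 2) t
          / (q' t ^ 2 - t * q t ^ 2 - (q t ^ 2) ^ 2) ^ 2
        + 2 * (q t ^ 2 / (q' t ^ 2 - t * q t ^ 2 - (q t ^ 2) ^ 2)) ^ 3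
        + 6 * (q t ^ 2) ^ 2 / (q' t ^ 2 - t * q t ^ 2 - (q t ^ 2) ^ 2)
        + 4 * t * q t ^ 2 / (q' t ^ 2 - t * q t ^ 2 - (q t ^ 2) ^ 2)
        + 2 := by
  intro t
  have hg₁ : HasDerivAt (fun s => 2 * q s * q' s) (2 * q' t * q' t + 2 * q t * q'' t) t :=
    ((hq t).const_mul 2).mul (hq' t) |>.congr_deriv (by ring)
  have hf'' := deriv_deriv_div_of_hasDerivAt_neg (u := painleveIIHamiltonian q q')
    (fun s => hasDerivAt_sq_of_hasDerivAt (hq s))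
    (fun s => hasDerivAt_painleveIIHamiltonian (hq s) (hq' s) (hPII s)) hune hg₁
  have hg₂ : 2 * q' t * q' t + 2 * q t * q'' t
      = 2 * painleveIIHamiltonian q q' t + 6 * (q t ^ 2) ^ 2 + 4 * t * q t ^ 2 := by
    rw [painleveIIHamiltonian, hPII]
    ring
  rw [(hasDerivAt_sq_of_hasDerivAt (hq t)).deriv,
    show q' t ^ 2 - t * q t ^ 2 - (q t ^ 2) ^ 2 = painleveIIHamiltonian q q' t from rfl]
  refine hf''.trans ?_
  rw [hg₂]
  have hut : painleveIIHamiltonian q q' t ≠ 0 := hune t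
  generalize painleveIIHamiltonian q q' t = u at hut ⊢
  field_simp
  ring

/-- For `g = q²`, `u = (q')² - tg - g²` with `q` a nonvanishing Painlevé II
solution and `u` nonvanishing:
`(g/u)'' = 3gg'/u² + 2(g/u)³ + 6g²/u + 4tg/u + 2`. -/
theorem stmt_7 (q q' q'' : ℝ → ℝ)
    (hq : ∀ t, HasDerivAt q (q' t) t)
    (hq' : ∀ t, HasDerivAt q' (q'' t) t)
    (hPII : ∀ t, q'' t = 2 * q t ^ 3 + t * q t)
    (hqne : ∀ t, q t ≠ 0)
    (hune : ∀ t, q' t ^ 2 - t * q t ^ 2 - (q t ^ 2) ^ 2 ≠ 0) :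
    ∀ t, deriv (deriv (fun s => q s ^ 2 / (q' s ^ 2 - s * q s ^ 2 - (q s ^ 2) ^ 2))) t
      = 3 * q t ^ 2 * deriv (fun s => q s ^ 2) t
          / (q' t ^ 2 - t * q t ^ 2 - (q t ^ 2) ^ 2) ^ 2
        + 2 * (q t ^ 2 / (q' t ^ 2 - t * q t ^ 2 - (q t ^ 2) ^ 2)) ^ 3
        + 6 * (q t ^ 2) ^ 2 / (q' t ^ 2 - t * q t ^ 2 - (q t ^ 2) ^ 2)
        + 4 * t * q t ^ 2 / (q' t ^ 2 - t * q t ^ 2 - (q t ^ 2) ^ 2)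
        + 2 :=
  stmt_7_general q q' q'' hq hq' hPII hune
end

section
/- Let r, q₂, q₁, q₀ be real numbers and e₁, e₂, e₃, U, u_r real numbers satisfying: e₁(q₂²−1) = r(q₂²−1) + 2q₂q₁; e₂(q₂²−1) = r e₁(q₂²−1) + 2q₂q₀ + q₁² + 2t; e₃(q₂²−1) = r e₂(q₂²−1) + 2q₁q₀ + 2 + 2q₂; 0 = r e₃(q₂²−1) + q₀² + 2U − 2e₁q₂ + 4q₁; and u_r = U + (r − e₁)q₂ + 2q₁. Then (r²q₂ + r q₁ + q₀)² − r⁴ + 2 t r² + 2 r + 2 u_r = 0. -/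
/-- The telescopic identity (3.8)/(3.10) of the κ=3 analysis: the combination
`r³·(3.1) + r²·(3.2) + r·(3.3) + (3.4)` of the four first-integral relations
yields `(r²q₂ + rq₁ + q₀)² - r⁴ + 2tr² + 2r + 2u_r = 0`. -/
theorem stmt_9 (t r q₂ q₁ q₀ e₁ e₂ e₃ U ur : ℝ)
    (h1 : e₁ * (q₂ ^ 2 - 1) = r * (q₂ ^ 2 - 1) + 2 * q₂ * q₁)
    (h2 : e₂ * (q₂ ^ 2 - 1) = r * e₁ * (q₂ ^ 2 - 1) + 2 * q₂ * q₀ + q₁ ^ 2 + 2 * t)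
    (h3 : e₃ * (q₂ ^ 2 - 1) = r * e₂ * (q₂ ^ 2 - 1) + 2 * q₁ * q₀ + 2 + 2 * q₂)
    (h4 : 0 = r * e₃ * (q₂ ^ 2 - 1) + q₀ ^ 2 + 2 * U - 2 * e₁ * q₂ + 4 * q₁)
    (h5 : ur = U + (r - e₁) * q₂ + 2 * q₁) :
    (r ^ 2 * q₂ + r * q₁ + q₀) ^ 2 - r ^ 4 + 2 * t * r ^ 2 + 2 * r + 2 * ur = 0 := by
  linear_combination -r ^ 3 * h1 - r ^ 2 * h2 - r * h3 - h4 + 2 * h5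
end

section
/- Let q₂, q₁, q₀ ∈ ℝ with q₂² ≠ 1, and let e₁, e₂, e₃, t, U ∈ ℝ satisfy the three first integrals: (e₁² − e₂)(q₂² − 1)/2 − e₁ q₂ q₁ + (2 q₂ q₀ + q₁² + 2t)/2 = 0, (e₃ − e₁ e₂)(q₂² − 1)/2 + e₂ q₂ q₁ − q₁ q₀ − q₂ − 1 = 0, and e₁ e₃ (q₂² − 1)/2 − e₃ q₂ q₁ + q₀²/2 + U − e₁ q₂ + 2 q₁ = 0. Then the polynomial (q₂²−1)/2·x⁴ − q₂q₁ x³ + (2q₂q₀+q₁²+2t)/2·x² − (q₁q₀+q₂+1)x + q₀²/2 + U − e₁q₂ + 2q₁ equals (x³ − e₁x² + e₂x − e₃)·((q₂²−1)/2·(x+e₁) − q₂q₁) as polynomials in x. -/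
theorem stmt_10_general (q₂ q₁ q₀ e₁ e₂ e₃ t U : ℝ)
    (I2 : (e₁ ^ 2 - e₂) * (q₂ ^ 2 - 1) / 2 - e₁ * q₂ * q₁
      + (2 * q₂ * q₀ + q₁ ^ 2 + 2 * t) / 2 = 0)
    (I1 : (e₃ - e₁ * e₂) * (q₂ ^ 2 - 1) / 2 + e₂ * q₂ * q₁ - q₁ * q₀ - q₂ - 1 = 0)
    (I0 : e₁ * e₃ * (q₂ ^ 2 - 1) / 2 - e₃ * q₂ * q₁ + q₀ ^ 2 / 2
      + U - e₁ * q₂ + 2 * q₁ = 0) :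
    ∀ x : ℝ,
      (q₂ ^ 2 - 1) / 2 * x ^ 4 - q₂ * q₁ * x ^ 3
        + (2 * q₂ * q₀ + q₁ ^ 2 + 2 * t) / 2 * x ^ 2
        - (q₁ * q₀ + q₂ + 1) * x + q₀ ^ 2 / 2 + U - e₁ * q₂ + 2 * q₁
      = (x ^ 3 - e₁ * x ^ 2 + e₂ * x - e₃)
        * ((q₂ ^ 2 - 1) / 2 * (x + e₁) - q₂ * q₁) := by
  intro x
  linear_combination x ^ 2 * I2 + x * I1 + I0

/-- The polynomial division identity (2.13): vanishing of the three first
integrals `I₂, I₁, I₀` makes the quartic divisible by `x³ - e₁x² + e₂x - e₃`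
with the stated quotient. -/
theorem stmt_10 (q₂ q₁ q₀ e₁ e₂ e₃ t U : ℝ) (h : q₂ ^ 2 ≠ 1)
    (I2 : (e₁ ^ 2 - e₂) * (q₂ ^ 2 - 1) / 2 - e₁ * q₂ * q₁
      + (2 * q₂ * q₀ + q₁ ^ 2 + 2 * t) / 2 = 0)
    (I1 : (e₃ - e₁ * e₂) * (q₂ ^ 2 - 1) / 2 + e₂ * q₂ * q₁ - q₁ * q₀ - q₂ - 1 = 0)
    (I0 : e₁ * e₃ * (q₂ ^ 2 - 1) / 2 - e₃ * q₂ * q₁ + q₀ ^ 2 / 2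
      + U - e₁ * q₂ + 2 * q₁ = 0) :
    ∀ x : ℝ,
      (q₂ ^ 2 - 1) / 2 * x ^ 4 - q₂ * q₁ * x ^ 3
        + (2 * q₂ * q₀ + q₁ ^ 2 + 2 * t) / 2 * x ^ 2
        - (q₁ * q₀ + q₂ + 1) * x + q₀ ^ 2 / 2 + U - e₁ * q₂ + 2 * q₁
      = (x ^ 3 - e₁ * x ^ 2 + e₂ * x - e₃)
        * ((q₂ ^ 2 - 1) / 2 * (x + e₁) - q₂ * q₁) :=
  stmt_10_general q₂ q₁ q₀ e₁ e₂ e₃ t U I2 I1 I0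
end

section
/- Let q, r be differentiable on ℝ with q nonvanishing, q' = -r q and r' = r² - t - 2q², and let χ, μ, ν be differentiable with 3χ' = -2rμ - ν, 3μ' = -2rχ, 3ν' = -2(r'μ + (r²−t)χ). Define μ₊ = μ + χ, μ₋ = μ − χ, g = q², and u = (q')² − t q² − q⁴. Then: 3 g μ₊' = g' μ₊ − g ν, 3 g μ₋' = −g' μ₋ + g ν, and 3 g ν' = 2 g² μ₋ − 2 u μ₊. -/
/-!
Since `q' = -r q`, the function `g = q²` satisfies `g' = -2 r g`, and the Hamiltonian is
`u = g (r² - t - g)`. In the variables `μ₊ = μ + χ`, `μ₋ = μ - χ` the system reads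
`3 μ₊' = -2 r μ₊ - ν`, `3 μ₋' = 2 r μ₋ + ν`, and `r' = r² - t - 2g` turns the equation for `ν`
into `3 ν' = -2 (r² - t) μ₊ + 4 g μ`. Multiplying each line by `g` and eliminating `r` through
`g' = -2 r g` and the formula for `u` gives the three identities.
-/

section

variable {q r χ μ ν : ℝ → ℝ} {t : ℝ}

lemma deriv_sq_of_deriv_eq_neg_mul (hqd : DifferentiableAt ℝ q t)
    (hq : deriv q t = -r t * q t) :
    deriv (fun s => q s ^ 2) t = -2 * r t * q t ^ 2 := by
  rw [deriv_fun_pow hqd, hq]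
  ring

lemma sq_deriv_sub_eq_of_deriv_eq_neg_mul (hq : deriv q t = -r t * q t) :
    deriv q t ^ 2 - t * q t ^ 2 - q t ^ 4 = q t ^ 2 * (r t ^ 2 - t - q t ^ 2) := by
  rw [hq]
  ring

lemma three_mul_deriv_add_eq (hχd : DifferentiableAt ℝ χ t) (hμd : DifferentiableAt ℝ μ t)
    (hχ : 3 * deriv χ t = -2 * r t * μ t - ν t) (hμ : 3 * deriv μ t = -2 * r t * χ t) :
    3 * deriv (fun s => μ s + χ s) t = -2 * r t * (μ t + χ t) - ν t := by
  rw [deriv_fun_add hμd hχd]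
  linear_combination hμ + hχ

lemma three_mul_deriv_sub_eq (hχd : DifferentiableAt ℝ χ t) (hμd : DifferentiableAt ℝ μ t)
    (hχ : 3 * deriv χ t = -2 * r t * μ t - ν t) (hμ : 3 * deriv μ t = -2 * r t * χ t) :
    3 * deriv (fun s => μ s - χ s) t = 2 * r t * (μ t - χ t) + ν t := by
  rw [deriv_fun_sub hμd hχd]
  linear_combination hμ - hχ

end

theorem stmt_11_general (q r χ μ ν : ℝ → ℝ)
    (hqd : Differentiable ℝ q)
    (hχd : Differentiable ℝ χ) (hμd : Differentiable ℝ μ)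
    (hq : ∀ t, deriv q t = -(r t) * q t)
    (hr : ∀ t, deriv r t = r t ^ 2 - t - 2 * q t ^ 2)
    (hχ : ∀ t, 3 * deriv χ t = -2 * r t * μ t - ν t)
    (hμ : ∀ t, 3 * deriv μ t = -2 * r t * χ t)
    (hν : ∀ t, 3 * deriv ν t = -2 * (deriv r t * μ t + (r t ^ 2 - t) * χ t)) :
    ∀ t,
      3 * q t ^ 2 * deriv (fun s => μ s + χ s) t
        = deriv (fun s => q s ^ 2) t * (μ t + χ t) - q t ^ 2 * ν t
      ∧ 3 * q t ^ 2 * deriv (fun s => μ s - χ s) t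
        = -(deriv (fun s => q s ^ 2) t) * (μ t - χ t) + q t ^ 2 * ν t
      ∧ 3 * q t ^ 2 * deriv ν t
        = 2 * (q t ^ 2) ^ 2 * (μ t - χ t)
          - 2 * ((deriv q t) ^ 2 - t * q t ^ 2 - q t ^ 4) * (μ t + χ t) := by
  intro t
  have hg := deriv_sq_of_deriv_eq_neg_mul (hqd t) (hq t)
  have hu := sq_deriv_sub_eq_of_deriv_eq_neg_mul (hq t)
  have hplus := three_mul_deriv_add_eq (hχd t) (hμd t) (hχ t) (hμ t)
  have hminus := three_mul_deriv_sub_eq (hχd t) (hμd t) (hχ t) (hμ t)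
  refine ⟨?_, ?_, ?_⟩
  · rw [hg]
    linear_combination q t ^ 2 * hplus
  · rw [hg]
    linear_combination q t ^ 2 * hminus
  · rw [hu]
    linear_combination q t ^ 2 * hν t - 2 * q t ^ 2 * μ t * hr t

/-- The linear system (3.24)–(3.26) in the variables `χ, μ, ν` transforms into
the system (1.15)–(1.17) for `μ₊ = μ + χ`, `μ₋ = μ - χ`, with `g = q²` and
`u = (q')² - tq² - q⁴`. -/
theorem stmt_11 (q r χ μ ν : ℝ → ℝ)
    (hqne : ∀ t, q t ≠ 0)
    (hqd : Differentiable ℝ q) (hrd : Differentiable ℝ r)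
    (hχd : Differentiable ℝ χ) (hμd : Differentiable ℝ μ) (hνd : Differentiable ℝ ν)
    (hq : ∀ t, deriv q t = -(r t) * q t)
    (hr : ∀ t, deriv r t = r t ^ 2 - t - 2 * q t ^ 2)
    (hχ : ∀ t, 3 * deriv χ t = -2 * r t * μ t - ν t)
    (hμ : ∀ t, 3 * deriv μ t = -2 * r t * χ t)
    (hν : ∀ t, 3 * deriv ν t = -2 * (deriv r t * μ t + (r t ^ 2 - t) * χ t)) :
    ∀ t,
      3 * q t ^ 2 * deriv (fun s => μ s + χ s) t
        = deriv (fun s => q s ^ 2) t * (μ t + χ t) - q t ^ 2 * ν t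
      ∧ 3 * q t ^ 2 * deriv (fun s => μ s - χ s) t
        = -(deriv (fun s => q s ^ 2) t) * (μ t - χ t) + q t ^ 2 * ν t
      ∧ 3 * q t ^ 2 * deriv ν t
        = 2 * (q t ^ 2) ^ 2 * (μ t - χ t)
          - 2 * ((deriv q t) ^ 2 - t * q t ^ 2 - q t ^ 4) * (μ t + χ t) :=
  stmt_11_general q r χ μ ν hqd hχd hμd hq hr hχ hμ hν
end

section
/- Let g, u, h₊, h₋ : ℝ → ℝ be differentiable with g, u, h₊, h₋ nonvanishing, satisfying 3g h₊' + g' h₊ − g h₊² + 2u = 2g² h₊/h₋ and 3g h₋' − g' h₋ + g h₋² − 2g² = −2u h₋/h₊. Suppose further u = (g')²/(4g) − g² − tg, u' = −g, and g'' = 6g² + 4tg + 2u. If h₋ is twice differentiable, then 9 h₋'' + 9(h₋ + g/u) h₋' + h₋³ + 3(g/u) h₋² − (3 g'/u + 12 g + 4t) h₋ − 8 g' − 6 g²/u = 0. -/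
/-!
By (4.21), `h₊ · A = -2 u h₋` with `A = 3 g h₋' - g' h₋ + g h₋² - 2 g²`, so `h₊` is an algebraic
function of `h₋, h₋'`, and differentiating this identity expresses `h₊'` through `h₋''` as well.
Substituting both into (4.20) leaves a relation among `h₋, h₋', h₋''` and `g, g', g'', u`;
eliminating `g''` by Painlevé II and `(g')²` by the Hamiltonian, it becomes `g² h₋ u` times (4.25).
-/

theorem hasDerivAt_riccati_expr {𝕜 : Type*} [NontriviallyNormedField 𝕜] {g G a a₁ : 𝕜 → 𝕜}
    {t g' G' a' a₁' : 𝕜} (hg : HasDerivAt g g' t) (hG : HasDerivAt G G' t)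
    (ha : HasDerivAt a a' t) (ha₁ : HasDerivAt a₁ a₁' t) :
    HasDerivAt (fun s => 3 * g s * a₁ s - G s * a s + g s * a s ^ 2 - 2 * g s ^ 2)
      (3 * g' * a₁ t + 3 * g t * a₁' - (G' * a t + G t * a')
        + (g' * a t ^ 2 + g t * (2 * a t * a')) - 2 * (2 * g t * g')) t := by
  refine ((((hg.const_mul 3).fun_mul ha₁).fun_sub (hG.fun_mul ha)).fun_add
    (hg.fun_mul (ha.fun_pow 2)) |>.fun_sub ((hg.fun_pow 2).const_mul 2)).congr_deriv ?_
  norm_num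

/-- `h2'` is the derivative of `h2`, with `u' = -g` already substituted. -/
theorem second_order_eq_of_riccati {K : Type*} [Field K] [CharZero K]
    {g g' u a a' p p' A A' : K} (hu : u ≠ 0) (ha : a ≠ 0)
    (h1 : 3 * g * p' + g' * p - g * p ^ 2 + 2 * u = 2 * g ^ 2 * p / a)
    (h2 : p * A = -2 * u * a)
    (h2' : p' * A + p * A' = 2 * g * a - 2 * u * a') :
    3 * g * a * u * A' = -A ^ 2 * u - 2 * g ^ 2 * A * u + g' * A * a * u
      + 2 * u ^ 2 * a ^ 2 * g - 3 * g ^ 2 * A * a + 3 * g * a' * A * u := by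
  have hA : A ≠ 0 := by
    rintro rfl
    norm_num [hu, ha] at h2
  have hp : p = -2 * u * a / A := by rw [eq_div_iff hA, h2]
  have hp' : p' = (2 * g * a - 2 * u * a' - p * A') / A := by
    rw [eq_div_iff hA]
    linear_combination h2'
  rw [hp', hp] at h1
  field_simp at h1
  linear_combination h1

theorem hm_ode_of_second_order_eq {K : Type*} [Field K] [CharZero K]
    {g g' g'' u a a' a'' t A A' : K} (hg : g ≠ 0) (hu : u ≠ 0) (ha : a ≠ 0)
    (hA : A = 3 * g * a' - g' * a + g * a ^ 2 - 2 * g ^ 2)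
    (hA' : A' = 3 * g' * a' + 3 * g * a'' - (g'' * a + g' * a')
      + (g' * a ^ 2 + g * (2 * a * a')) - 2 * (2 * g * g'))
    (hg'' : g'' = 6 * g ^ 2 + 4 * t * g + 2 * u)
    (hug : u = g' ^ 2 / (4 * g) - g ^ 2 - t * g)
    (h : 3 * g * a * u * A' = -A ^ 2 * u - 2 * g ^ 2 * A * u + g' * A * a * u
      + 2 * u ^ 2 * a ^ 2 * g - 3 * g ^ 2 * A * a + 3 * g * a' * A * u) :
    9 * a'' + 9 * (a + g / u) * a' + a ^ 3 + 3 * (g / u) * a ^ 2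
      - (3 * g' / u + 12 * g + 4 * t) * a - 8 * g' - 6 * g ^ 2 / u = 0 := by
  have hg' : g' ^ 2 = 4 * g * u + 4 * g ^ 3 + 4 * t * g ^ 2 := by
    rw [hug]
    field_simp
    ring
  subst hA hA' hg''
  have hfactored : g ^ 2 * a * (9 * u * a'' + 9 * (u * a + g) * a' + u * a ^ 3 + 3 * g * a ^ 2
      - 3 * g' * a - 12 * g * u * a - 4 * t * u * a - 8 * g' * u - 6 * g ^ 2) = 0 := by
    linear_combination h - 2 * a ^ 2 * u * hg'
  have hcleared : 9 * u * a'' + 9 * (u * a + g) * a' + u * a ^ 3 + 3 * g * a ^ 2 - 3 * g' * a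
      - 12 * g * u * a - 4 * t * u * a - 8 * g' * u - 6 * g ^ 2 = 0 := by
    simpa [hg, ha] using hfactored
  field_simp
  linear_combination hcleared

/-- From the coupled Riccati system (4.20)–(4.21) for `h₊, h₋`, with `g = q²`
and `u` the Painlevé II Hamiltonian, the function `h₋` satisfies the
second-order ODE (4.25). -/
theorem stmt_12 (g u hp hm : ℝ → ℝ)
    (hgd : Differentiable ℝ g) (hud : Differentiable ℝ u)
    (hpd : Differentiable ℝ hp) (hmd : Differentiable ℝ hm)
    (hgne : ∀ t, g t ≠ 0) (hune : ∀ t, u t ≠ 0)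
    (hpne : ∀ t, hp t ≠ 0) (hmne : ∀ t, hm t ≠ 0)
    (hric1 : ∀ t, 3 * g t * deriv hp t + deriv g t * hp t - g t * hp t ^ 2 + 2 * u t
      = 2 * g t ^ 2 * hp t / hm t)
    (hric2 : ∀ t, 3 * g t * deriv hm t - deriv g t * hm t + g t * hm t ^ 2 - 2 * g t ^ 2
      = -2 * u t * hm t / hp t)
    (hu : ∀ t, u t = (deriv g t) ^ 2 / (4 * g t) - g t ^ 2 - t * g t)
    (hu' : ∀ t, deriv u t = -g t)
    (hg'' : ∀ t, deriv (deriv g) t = 6 * g t ^ 2 + 4 * t * g t + 2 * u t)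
    (hm2 : Differentiable ℝ (deriv hm)) :
    ∀ t, 9 * deriv (deriv hm) t + 9 * (hm t + g t / u t) * deriv hm t
      + hm t ^ 3 + 3 * (g t / u t) * hm t ^ 2
      - (3 * deriv g t / u t + 12 * g t + 4 * t) * hm t
      - 8 * deriv g t - 6 * g t ^ 2 / u t = 0 := by
  intro t
  have hpA : ∀ s, hp s * (3 * g s * deriv hm s - deriv g s * hm s + g s * hm s ^ 2 - 2 * g s ^ 2)
      = -2 * u s * hm s := fun s => by
    rw [hric2 s, mul_div_cancel₀ _ (hpne s)]
  have hg'd : Differentiable ℝ (deriv g) := by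
    have hg'_eq : deriv g = fun s =>
        (3 * g s * deriv hm s + g s * hm s ^ 2 - 2 * g s ^ 2 + 2 * u s * hm s / hp s) / hm s := by
      funext s
      rw [eq_div_iff (hmne s)]
      linear_combination -hric2 s
    rw [hg'_eq]
    fun_prop (disch := assumption)
  have hA' := hasDerivAt_riccati_expr (hgd t).hasDerivAt (hg'd t).hasDerivAt
    (hmd t).hasDerivAt (hm2 t).hasDerivAt
  have hpA' := ((hpd t).hasDerivAt.fun_mul hA').unique <| by
    rw [funext hpA]
    exact ((hud t).hasDerivAt.const_mul (-2)).fun_mul (hmd t).hasDerivAt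
  rw [hu' t] at hpA'
  exact hm_ode_of_second_order_eq (hgne t) (hune t) (hmne t) rfl rfl (hg'' t) (hu t)
    (second_order_eq_of_riccati (hune t) (hmne t) (hric1 t) (hpA t)
      (by linear_combination hpA'))
end

section
/- Suppose F : ℝ × ℝ → ℝ is given by an absolutely convergent expansion F(t,x) = Σ_{n≥0} Fₙ(t)/xⁿ for |x| > R, termwise differentiable in t and x, and F satisfies κ ∂_t F + ∂ₓₓ F + (t − x²) ∂ₓ F = 0. Then F₁ = −κ F₀', F₂ = (κ²/2) F₀'', F₃ = −(κ³ F₀''' + 2tκ F₀')/6, and for n ≥ 3: (n+1)F_{n+1} = −κ Fₙ' + (n−1)t F_{n−1} − (n−1)(n−2) F_{n−2}. -/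
open scoped ContDiff

set_option maxHeartbeats 1600000

lemma abs_bdd_of_summable {f : ℕ → ℝ} (h : Summable f) : ∃ C, 0 ≤ C ∧ ∀ n, |f n| ≤ C := by
  have h0 : Filter.Tendsto (fun n => |f n|) Filter.atTop (nhds 0) := by
    simpa using h.tendsto_atTop_zero.abs
  obtain ⟨C, hC⟩ := h0.bddAbove_range
  exact ⟨C, le_trans (abs_nonneg _) (hC ⟨0, rfl⟩), fun n => hC ⟨n, rfl⟩⟩


private lemma aux_mul (a Y B : ℝ) (hB : B ≠ 0) : a * Y = a * B * (Y / B) := by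
  field_simp


lemma coeffs_zero {e : ℕ → ℝ} {r : ℝ} (hr : 0 < r)
    (hs : ∀ y : ℝ, 0 < y → y < r → Summable (fun n => e n * y ^ n))
    (hz : ∀ y : ℝ, 0 < y → y < r → ∑' n, e n * y ^ n = 0) :
    ∀ n, e n = 0 := by
  obtain ⟨y₀, hy₀0, hy₀r⟩ : ∃ y₀, 0 < y₀ ∧ y₀ < r := ⟨r/2, by positivity, by linarith⟩
  obtain ⟨C, hC0, hC⟩ := abs_bdd_of_summable (hs y₀ hy₀0 hy₀r)
  have hCb : ∀ n, |e n| * y₀ ^ n ≤ C := by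
    intro n; have := hC n; rwa [abs_mul, abs_pow, abs_of_pos hy₀0] at this
  have key : ∀ k : ℕ, (∀ y : ℝ, 0 < y → y < r → ∑' n, e (n+k) * y ^ (n+k) = 0) →
      e k = 0 ∧ ∀ y : ℝ, 0 < y → y < r → ∑' n, e (n+(k+1)) * y ^ (n+(k+1)) = 0 := by
    intro k hk
    have hS : ∀ y : ℝ, 0 < y → y < r → Summable (fun n => e (n+k) * y ^ (n+k)) := by
      intro y hy0 hyr
      exact (summable_nat_add_iff k).mpr (hs y hy0 hyr)
    have hsplit : ∀ y : ℝ, 0 < y → y < r →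
        e k * y ^ k = - ∑' n, e (n+1+k) * y ^ (n+1+k) := by
      intro y hy0 hyr
      have h1 := Summable.tsum_eq_zero_add (hS y hy0 hyr)
      rw [hk y hy0 hyr] at h1
      simp only [zero_add] at h1
      linarith [h1]
    have htail : ∀ y : ℝ, 0 < y → y ≤ y₀ / 2 →
        |∑' n, e (n+1+k) * y ^ (n+1+k)| ≤ 2 * C * (y/y₀)^(k+1) := by
      intro y hy0 hyy
      have hq0 : 0 < y / y₀ := by positivity
      have hq : y / y₀ ≤ 1/2 := by
        rw [div_le_div_iff₀ hy₀0 (by norm_num)]; linarith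
      have hbd : ∀ n, |e (n+1+k) * y ^ (n+1+k)| ≤ C * (y/y₀)^(k+1) * (y/y₀)^n := by
        intro n
        rw [abs_mul, abs_pow, abs_of_pos hy0]
        have hne : y₀ ^ (n+1+k) ≠ 0 := (pow_pos hy₀0 _).ne'
        have h1 : |e (n+1+k)| * y ^ (n+1+k)
            = (|e (n+1+k)| * y₀ ^ (n+1+k)) * (y/y₀)^(n+1+k) := by
          rw [div_pow]
          exact aux_mul _ _ _ hne
        rw [h1]
        have h2 : (y/y₀)^(n+1+k) = (y/y₀)^(k+1) * (y/y₀)^n := by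
          rw [← pow_add]
          congr 1
          omega
        rw [h2]
        have h3 : (0:ℝ) ≤ (y/y₀)^(k+1) * (y/y₀)^n := by positivity
        calc |e (n+1+k)| * y₀ ^ (n+1+k) * ((y/y₀)^(k+1) * (y/y₀)^n)
            ≤ C * ((y/y₀)^(k+1) * (y/y₀)^n) :=
              mul_le_mul_of_nonneg_right (hCb (n+1+k)) h3
          _ = C * (y/y₀)^(k+1) * (y/y₀)^n := by ring
      have hgeo : Summable (fun n : ℕ => C * (y/y₀)^(k+1) * (y/y₀)^n) :=
        (summable_geometric_of_lt_one (le_of_lt hq0) (by linarith)).mul_left _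
      have habs : Summable (fun n => |e (n+1+k) * y ^ (n+1+k)|) :=
        Summable.of_nonneg_of_le (fun n => abs_nonneg _) hbd hgeo
      calc |∑' n, e (n+1+k) * y ^ (n+1+k)|
          ≤ ∑' n, |e (n+1+k) * y ^ (n+1+k)| := by
            have habs' : Summable (fun n => ‖e (n+1+k) * y ^ (n+1+k)‖) := habs
            have := norm_tsum_le_tsum_norm habs'
            simpa [Real.norm_eq_abs, abs_mul, abs_pow] using this
        _ ≤ ∑' n : ℕ, C * (y/y₀)^(k+1) * (y/y₀)^n := Summable.tsum_le_tsum hbd habs hgeo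
        _ = C * (y/y₀)^(k+1) * (1 - y/y₀)⁻¹ := by
            rw [tsum_mul_left, tsum_geometric_of_lt_one (le_of_lt hq0) (by linarith)]
        _ ≤ 2 * C * (y/y₀)^(k+1) := by
            have hinv : (1 - y/y₀)⁻¹ ≤ 2 := by
              rw [inv_le_comm₀ (by linarith) (by norm_num)]
              linarith
            have h4 : (0:ℝ) ≤ C * (y/y₀)^(k+1) := by positivity
            nlinarith
    have hek : e k = 0 := by
      have hsmall : ∀ y : ℝ, 0 < y → y ≤ y₀/2 → |e k| ≤ 2 * C / y₀^(k+1) * y := by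
        intro y hy0 hyy
        have hyr : y < r := by
          have : y₀ / 2 < r := by linarith
          linarith
        have h1 := hsplit y hy0 hyr
        have h2 := htail y hy0 hyy
        have h3 : |e k| * y^k ≤ 2*C*(y/y₀)^(k+1) := by
          rw [← abs_of_pos (pow_pos hy0 k), ← abs_mul, h1, abs_neg]
          exact h2
        have hyk : (0:ℝ) < y^k := pow_pos hy0 k
        have hy₀k : (0:ℝ) < y₀^(k+1) := pow_pos hy₀0 _
        rw [div_pow] at h3
        have h5 : |e k| ≤ 2*C*(y^(k+1)/y₀^(k+1))/y^k := by
          rw [le_div_iff₀ hyk]; linarith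
        have h6 : 2*C*(y^(k+1)/y₀^(k+1))/y^k = 2*C/y₀^(k+1) * y := by
          rw [pow_succ]
          field_simp
        rw [h6] at h5
        exact h5
      have habs0 : |e k| ≤ 0 := by
        apply le_of_forall_pos_le_add
        intro ε hε
        set K := 2*C/y₀^(k+1) with hK
        have hK0 : 0 ≤ K := by positivity
        set y := min (y₀/2) (ε/(K+1)) with hy
        have hy0 : 0 < y := lt_min (by positivity) (by positivity)
        have h7 := hsmall y hy0 (min_le_left _ _)
        have h8 : y ≤ ε/(K+1) := min_le_right _ _
        have h9 : K * y ≤ ε := by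
          calc K * y ≤ (K+1) * y := by nlinarith
            _ ≤ (K+1) * (ε/(K+1)) := by nlinarith
            _ = ε := by field_simp
        linarith
      exact abs_eq_zero.mp (le_antisymm habs0 (abs_nonneg _))
    refine ⟨hek, ?_⟩
    intro y hy0 hyr
    have h1 := Summable.tsum_eq_zero_add (hS y hy0 hyr)
    rw [hk y hy0 hyr] at h1
    simp only [zero_add] at h1
    have h2 : ∑' n, e (n+1+k) * y ^ (n+1+k) = 0 := by
      rw [hek] at h1
      simpa using h1.symm
    rw [← h2]
    apply tsum_congr
    intro n
    congr 2 <;> omega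
  have hall : ∀ k : ℕ, ∀ y : ℝ, 0 < y → y < r → ∑' n, e (n+k) * y ^ (n+k) = 0 := by
    intro k
    induction k with
    | zero => simpa using hz
    | succ k ih => exact (key k ih).2
  intro k
  exact (key k (hall k)).1


lemma coeffs_zero' {e : ℕ → ℝ} {x₁ : ℝ} (hx₁ : 0 < x₁)
    (h : ∀ x : ℝ, x₁ < x → Summable (fun n => e n / x ^ n) ∧ ∑' n, e n / x ^ n = 0) :
    ∀ n, e n = 0 := by
  have hr : (0:ℝ) < x₁⁻¹ := by positivity
  apply coeffs_zero hr
  · intro y hy0 hyr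
    have hxgt : x₁ < 1/y := by
      rw [lt_div_iff₀ hy0]
      calc x₁ * y < x₁ * x₁⁻¹ := by exact mul_lt_mul_of_pos_left hyr hx₁
        _ = 1 := mul_inv_cancel₀ hx₁.ne'
    apply ((h (1/y) hxgt).1).congr
    intro n
    rw [div_pow, one_pow, one_div, div_inv_eq_mul]
  · intro y hy0 hyr
    have hxgt : x₁ < 1/y := by
      rw [lt_div_iff₀ hy0]
      calc x₁ * y < x₁ * x₁⁻¹ := by exact mul_lt_mul_of_pos_left hyr hx₁
        _ = 1 := mul_inv_cancel₀ hx₁.ne'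
    rw [← (h (1/y) hxgt).2]
    apply tsum_congr
    intro n
    rw [div_pow, one_pow, one_div, div_inv_eq_mul]


lemma summable_of_quadgeo {g : ℕ → ℝ} {C q : ℝ} (hq0 : 0 ≤ q) (hq : q < 1)
    (h : ∀ n, |g n| ≤ C * (((n:ℝ)+2)^2 * q ^ n)) : Summable g := by
  have hnq : ‖q‖ < 1 := by rwa [Real.norm_eq_abs, abs_of_nonneg hq0]
  have h2 : Summable (fun n : ℕ => (n:ℝ)^2 * q ^ n) := summable_pow_mul_geometric_of_norm_lt_one 2 hnq
  have h1 : Summable (fun n : ℕ => (n:ℝ)^1 * q ^ n) := summable_pow_mul_geometric_of_norm_lt_one 1 hnq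
  have h0 : Summable (fun n : ℕ => (n:ℝ)^0 * q ^ n) := summable_pow_mul_geometric_of_norm_lt_one 0 hnq
  have hs : Summable (fun n : ℕ => C * (((n:ℝ)+2)^2 * q ^ n)) := by
    apply Summable.mul_left
    apply ((h2.add (h1.mul_left 4)).add (h0.mul_left 4)).congr
    intro n; ring
  exact Summable.of_abs (Summable.of_nonneg_of_le (fun n => abs_nonneg _) h hs)


lemma summable_div_pow {A : ℕ → ℝ} {C x₀ x : ℝ} (hx₀ : 1 ≤ x₀) (hx : x₀ < x)
    (hA : ∀ n, |A n| ≤ C * (((n:ℝ)+2)^2 * x₀ ^ n)) :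
    Summable (fun n => A n / x ^ n) := by
  have hx0 : (0:ℝ) < x := by linarith
  have hq0 : (0:ℝ) ≤ x₀ / x := by positivity
  have hq1 : x₀ / x < 1 := (div_lt_one hx0).mpr hx
  apply summable_of_quadgeo hq0 hq1 (C := C)
  intro n
  have hxn : (0:ℝ) < x^n := pow_pos hx0 n
  rw [abs_div, abs_pow, abs_of_pos hx0, div_le_iff₀ hxn]
  have he : C * (((n:ℝ)+2)^2 * (x₀/x)^n) * x^n = C * (((n:ℝ)+2)^2 * x₀^n) := by
    rw [div_pow]
    field_simp
  rw [he]
  exact hA n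


lemma summable_poly_mul {Fb : ℕ → ℝ} {C x₀ x : ℝ} (hC : 0 ≤ C) (hx₀ : 1 ≤ x₀) (hx : x₀ < x)
    (hFb : ∀ n, |Fb n| ≤ C * x₀ ^ n) (a b : ℕ → ℝ) (m : ℕ → ℕ)
    (ha : ∀ n, |a n| ≤ (n:ℝ) + 2) (hb : ∀ n, |b n| ≤ (n:ℝ) + 2) (hm : ∀ n, m n ≤ n + 1) :
    Summable (fun n => a n * b n * Fb (m n) / x ^ n) := by
  have hx00 : (0:ℝ) < x₀ := lt_of_lt_of_le zero_lt_one hx₀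
  apply summable_div_pow hx₀ hx (C := C * x₀)
  intro n
  have h1 : |Fb (m n)| ≤ C * x₀ ^ (n+1) := by
    refine le_trans (hFb (m n)) ?_
    exact mul_le_mul_of_nonneg_left (pow_le_pow_right₀ hx₀ (hm n)) hC
  calc |a n * b n * Fb (m n)| = |a n| * |b n| * |Fb (m n)| := by rw [abs_mul, abs_mul]
    _ ≤ (((n:ℝ)+2) * ((n:ℝ)+2)) * (C * x₀^(n+1)) := by
        apply mul_le_mul _ h1 (abs_nonneg _) (by positivity)
        exact mul_le_mul (ha n) (hb n) (abs_nonneg _) (by positivity)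
    _ = (C * x₀) * (((n:ℝ)+2)^2 * x₀ ^ n) := by rw [pow_succ]; ring


lemma tsum_shift1 {f g : ℕ → ℝ} (hf : Summable f) (h0 : f 0 = 0)
    (h : ∀ n, f (n+1) = g n) : ∑' n, f n = ∑' n, g n := by
  rw [Summable.tsum_eq_zero_add hf, h0, zero_add]
  exact tsum_congr h


lemma tsum_shift2 {f g : ℕ → ℝ} (hf : Summable f) (h0 : f 0 = 0) (h1 : f 1 = 0)
    (h : ∀ n, f (n+2) = g n) : ∑' n, f n = ∑' n, g n := by
  have hf1 : Summable (fun n => f (n+1)) := (summable_nat_add_iff 1).mpr hf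
  rw [Summable.tsum_eq_zero_add hf, h0, zero_add, Summable.tsum_eq_zero_add hf1]
  show f 1 + _ = _
  rw [h1, zero_add]
  exact tsum_congr h

noncomputable def FPcoef (Fn : ℕ → ℝ → ℝ) (n : ℕ) (t : ℝ) : ℝ :=
  ((n:ℝ)+1) * Fn (n+1) t - ((n-1 : ℕ) : ℝ) * t * Fn (n-1) t
    + ((n-1 : ℕ) : ℝ) * ((n-2 : ℕ) : ℝ) * Fn (n-2) t

/-- If `F(t,x) = Σ_{n≥0} Fₙ(t)/xⁿ` is an absolutely convergent, termwise
differentiable expansion for `|x| > R` and `F` solves the rescaled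
Fokker–Planck equation `κ∂ₜF + ∂ₓₓF + (t - x²)∂ₓF = 0`, then the coefficients
satisfy `F₁ = -κF₀'`, `F₂ = (κ²/2)F₀''`, `F₃ = -(κ³F₀''' + 2tκF₀')/6` and for
`n ≥ 3`, `(n+1)F_{n+1} = -κFₙ' + (n-1)tF_{n-1} - (n-1)(n-2)F_{n-2}`. -/
theorem stmt_15 (κ R : ℝ) (hκ : 0 < κ) (F : ℝ → ℝ → ℝ) (Fn : ℕ → ℝ → ℝ)
    (hFn : ∀ n, ContDiff ℝ (⊤ : ℕ∞) (Fn n))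
    (hsum : ∀ t x, R < |x| → Summable (fun n : ℕ => Fn n t / x ^ n))
    (hrep : ∀ t x, R < |x| → F t x = ∑' (n : ℕ), Fn n t / x ^ n)
    (hdt : ∀ t x, R < |x| →
      HasDerivAt (fun s => F s x) (∑' (n : ℕ), deriv (Fn n) t / x ^ n) t)
    (hdx : ∀ t x, R < |x| →
      HasDerivAt (fun y => F t y) (∑' (n : ℕ), -(n : ℝ) * Fn n t / x ^ (n + 1)) x)
    (hdxx : ∀ t x, R < |x| →
      HasDerivAt (fun y => deriv (F t) y)
        (∑' (n : ℕ), (n : ℝ) * ((n : ℝ) + 1) * Fn n t / x ^ (n + 2)) x)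
    (hPDE : ∀ t x, R < |x| →
      κ * deriv (fun s => F s x) t + deriv (deriv (F t)) x
        + (t - x ^ 2) * deriv (F t) x = 0) :
    ∀ t,
      Fn 1 t = -κ * deriv (Fn 0) t
      ∧ Fn 2 t = κ ^ 2 / 2 * deriv (deriv (Fn 0)) t
      ∧ Fn 3 t = -(κ ^ 3 * deriv (deriv (deriv (Fn 0))) t
          + 2 * t * κ * deriv (Fn 0) t) / 6
      ∧ ∀ n : ℕ, 3 ≤ n →
          ((n : ℝ) + 1) * Fn (n + 1) t
            = -κ * deriv (Fn n) t + ((n : ℝ) - 1) * t * Fn (n - 1) t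
              - ((n : ℝ) - 1) * ((n : ℝ) - 2) * Fn (n - 2) t := by
  obtain ⟨x₀, hx₀1, hx₀R⟩ : ∃ x₀ : ℝ, 1 ≤ x₀ ∧ R < x₀ :=
    ⟨max R 0 + 1, by simp [le_max_right R 0], lt_of_le_of_lt (le_max_left R 0) (lt_add_one _)⟩
  have hx₀pos : (0:ℝ) < x₀ := lt_of_lt_of_le zero_lt_one hx₀1
  have habsR : ∀ x : ℝ, x₀ ≤ x → R < |x| := fun x hx =>
    lt_of_lt_of_le hx₀R (le_trans hx (le_abs_self x))
  -- coefficient bound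
  have hbound : ∀ t, ∃ C, 0 ≤ C ∧ ∀ n, |Fn n t| ≤ C * x₀ ^ n := by
    intro t
    obtain ⟨C, hC0, hC⟩ := abs_bdd_of_summable (hsum t x₀ (habsR x₀ le_rfl))
    refine ⟨C, hC0, fun n => ?_⟩
    have h := hC n
    rw [abs_div, abs_pow, abs_of_pos hx₀pos, div_le_iff₀ (pow_pos hx₀pos n)] at h
    exact h
  -- key equation
  have hkey : ∀ t x, x₀ < x →
      Summable (fun n => FPcoef Fn n t / x ^ n) ∧
      κ * (∑' n, deriv (Fn n) t / x ^ n) + ∑' n, FPcoef Fn n t / x ^ n = 0 := by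
    intro t x hx
    have hx0 : (0:ℝ) < x := lt_trans hx₀pos hx
    have hxne : x ≠ 0 := hx0.ne'
    have hxR : R < |x| := habsR x hx.le
    obtain ⟨C, hC0, hFb⟩ := hbound t
    -- summability of the pieces
    have hcast1 : ∀ n : ℕ, |((n-1 : ℕ) : ℝ)| ≤ (n:ℝ) + 2 := by
      intro n
      rw [abs_of_nonneg (Nat.cast_nonneg _)]
      have : ((n-1:ℕ):ℝ) ≤ (n:ℝ) := by exact_mod_cast Nat.sub_le n 1
      linarith
    have hcast2 : ∀ n : ℕ, |((n-2 : ℕ) : ℝ)| ≤ (n:ℝ) + 2 := by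
      intro n
      rw [abs_of_nonneg (Nat.cast_nonneg _)]
      have : ((n-2:ℕ):ℝ) ≤ (n:ℝ) := by exact_mod_cast Nat.sub_le n 2
      linarith
    have hone : ∀ n : ℕ, |(1:ℝ)| ≤ (n:ℝ) + 2 := by
      intro n; rw [abs_one]; have : (0:ℝ) ≤ (n:ℝ) := Nat.cast_nonneg n; linarith
    have hu : Summable (fun n => ((n-1:ℕ):ℝ) * ((n-2:ℕ):ℝ) * Fn (n-2) t / x ^ n) :=
      summable_poly_mul hC0 hx₀1 hx hFb _ _ (fun n => n - 2) hcast1 hcast2 (fun n => le_trans (Nat.sub_le n 2) (Nat.le_succ n))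
    have hvbase : Summable (fun n => ((n-1:ℕ):ℝ) * 1 * Fn (n-1) t / x ^ n) :=
      summable_poly_mul hC0 hx₀1 hx hFb _ _ (fun n => n - 1) hcast1 hone (fun n => le_trans (Nat.sub_le n 1) (Nat.le_succ n))
    have hv : Summable (fun n => -(((n-1:ℕ):ℝ) * t * Fn (n-1) t / x ^ n)) := by
      apply (hvbase.mul_left (-t)).congr
      intro n; ring
    have hwbase : Summable (fun n : ℕ => ((n:ℝ)+1) * 1 * Fn (n+1) t / x ^ n) := by
      apply summable_poly_mul hC0 hx₀1 hx hFb _ _ (fun n => n + 1) _ hone (fun n => le_rfl)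
      intro n
      rw [abs_of_nonneg (by positivity)]
      linarith
    have hw : Summable (fun n : ℕ => ((n:ℝ)+1) * Fn (n+1) t / x ^ n) := by
      apply hwbase.congr; intro n; ring
    have hdxbase : Summable (fun n : ℕ => (-(n:ℝ)) * 1 * Fn n t / x ^ n) := by
      apply summable_poly_mul hC0 hx₀1 hx hFb _ _ (fun n => n) _ hone (fun n => Nat.le_succ n)
      intro n
      rw [abs_neg, abs_of_nonneg (Nat.cast_nonneg _)]
      linarith [Nat.cast_nonneg (α := ℝ) n]
    have hdxs : Summable (fun n : ℕ => -(n:ℝ) * Fn n t / x ^ (n+1)) := by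
      apply (hdxbase.mul_left x⁻¹).congr
      intro n
      rw [pow_succ, div_mul_eq_div_div]
      ring
    have hcsum : Summable (fun n => FPcoef Fn n t / x ^ n) := by
      apply ((hu.add hv).add hw).congr
      intro n
      simp only [FPcoef]
      ring
    -- derivative values
    have hBv : deriv (F t) x = ∑' (n : ℕ), -(n : ℝ) * Fn n t / x ^ (n + 1) :=
      (hdx t x hxR).deriv
    have hC2v : deriv (deriv (F t)) x
        = ∑' (n : ℕ), (n : ℝ) * ((n : ℝ) + 1) * Fn n t / x ^ (n + 2) :=
      (hdxx t x hxR).deriv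
    have hAv : deriv (fun s => F s x) t = ∑' (n : ℕ), deriv (Fn n) t / x ^ n :=
      (hdt t x hxR).deriv
    -- reindexing identities
    have hu_eq : ∑' (n : ℕ), ((n-1:ℕ):ℝ) * ((n-2:ℕ):ℝ) * Fn (n-2) t / x ^ n
        = ∑' (n : ℕ), (n : ℝ) * ((n : ℝ) + 1) * Fn n t / x ^ (n + 2) := by
      apply tsum_shift2 hu
      · norm_num
      · norm_num
      · intro n
        show ((n+1:ℕ):ℝ) * ((n:ℕ):ℝ) * Fn n t / x ^ (n+2) = _
        push_cast
        ring
    have hv_eq : ∑' (n : ℕ), -(((n-1:ℕ):ℝ) * t * Fn (n-1) t / x ^ n)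
        = t * ∑' (n : ℕ), -(n : ℝ) * Fn n t / x ^ (n + 1) := by
      rw [← tsum_mul_left]
      apply tsum_shift1 hv
      · norm_num
      · intro n
        show -(((n:ℕ):ℝ) * t * Fn n t / x ^ (n+1)) = _
        push_cast
        ring
    have hw_eq : ∑' (n : ℕ), ((n:ℝ)+1) * Fn (n+1) t / x ^ n
        = -(x^2) * ∑' (n : ℕ), -(n : ℝ) * Fn n t / x ^ (n + 1) := by
      rw [← tsum_mul_left]
      symm
      apply tsum_shift1 (hdxs.mul_left (-(x^2)))
      · norm_num
      · intro n
        show -(x^2) * (-((n+1:ℕ):ℝ) * Fn (n+1) t / x ^ (n+1+1)) = _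
        push_cast
        rw [show n+1+1 = n+2 from rfl, pow_add x n 2]
        field_simp
    have hsplit : ∑' (n : ℕ), FPcoef Fn n t / x ^ n
        = (∑' (n : ℕ), ((n-1:ℕ):ℝ) * ((n-2:ℕ):ℝ) * Fn (n-2) t / x ^ n)
          + (∑' (n : ℕ), -(((n-1:ℕ):ℝ) * t * Fn (n-1) t / x ^ n))
          + (∑' (n : ℕ), ((n:ℝ)+1) * Fn (n+1) t / x ^ n) := by
      rw [← Summable.tsum_add hu hv, ← Summable.tsum_add (hu.add hv) hw]
      apply tsum_congr
      intro n
      simp only [FPcoef]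
      ring
    refine ⟨hcsum, ?_⟩
    have hp := hPDE t x hxR
    rw [hAv, hBv, hC2v] at hp
    rw [hsplit, hu_eq, hv_eq, hw_eq]
    linear_combination hp
  -- from vanishing FPcoef, coefficients vanish
  have hczero_imp : ∀ t, (∀ n, FPcoef Fn n t = 0) → ∀ m, Fn (m+1) t = 0 := by
    intro t hc m
    induction m using Nat.strong_induction_on with
    | _ m ih =>
      match m with
      | 0 =>
        have h := hc 0
        simp only [FPcoef] at h
        norm_num at h
        exact h
      | 1 =>
        have h := hc 1
        simp only [FPcoef] at h
        norm_num at h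
        exact h
      | (m+2) =>
        have h := hc (m+2)
        simp only [FPcoef] at h
        have e1 : ((m+2-1 : ℕ):ℝ) = (m:ℝ)+1 := by
          rw [show m+2-1 = m+1 from rfl]; push_cast; ring
        have e2 : ((m+2-2 : ℕ):ℝ) = (m:ℝ) := by
          rw [show m+2-2 = m from rfl]
        rw [e1, e2, show m+2-1 = m+1 from rfl, show m+2-2 = m from rfl] at h
        have hm1 : Fn (m+1) t = 0 := ih m (by omega)
        have hm0 : (m:ℝ) * Fn m t = 0 := by
          match m with
          | 0 => simp
          | (k+1) => rw [ih k (by omega)]; ring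
        rw [hm1] at h
        have h3 : ((m:ℝ)+2+1) * Fn (m+2+1) t = 0 := by
          push_cast at h ⊢
          nlinarith [h, hm0]
        have hpos : (0:ℝ) < (m:ℝ)+2+1 := by positivity
        have := mul_eq_zero.mp h3
        rcases this with h4 | h4
        · exact absurd h4 hpos.ne'
        · exact h4
  -- positive case
  have main : ∀ t : ℝ, (∃ x, x₀ < x ∧ Summable (fun n => deriv (Fn n) t / x ^ n)) →
      ∀ n, κ * deriv (Fn n) t + FPcoef Fn n t = 0 := by
    rintro t ⟨x₂, hx₂, hs₂⟩
    obtain ⟨C₂, hC₂0, hC₂⟩ := abs_bdd_of_summable hs₂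
    have hx₂pos : (0:ℝ) < x₂ := lt_trans hx₀pos hx₂
    have h1x₂ : 1 ≤ x₂ := le_trans hx₀1 hx₂.le
    have hdb : ∀ n, |deriv (Fn n) t| ≤ C₂ * x₂ ^ n := by
      intro n
      have h := hC₂ n
      rw [abs_div, abs_pow, abs_of_pos hx₂pos, div_le_iff₀ (pow_pos hx₂pos n)] at h
      exact h
    apply coeffs_zero' (x₁ := x₂) (by linarith)
    intro x hx
    have hxx₀ : x₀ < x := lt_trans hx₂ hx
    have hone : ∀ n : ℕ, |(1:ℝ)| ≤ (n:ℝ) + 2 := by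
      intro n; rw [abs_one]; have : (0:ℝ) ≤ (n:ℝ) := Nat.cast_nonneg n; linarith
    have hdsumbase : Summable (fun n => (1:ℝ) * 1 * deriv (Fn n) t / x ^ n) :=
      summable_poly_mul hC₂0 h1x₂ hx hdb _ _ (fun n => n) hone hone (fun n => Nat.le_succ n)
    have hdsum : Summable (fun n => deriv (Fn n) t / x ^ n) := by
      apply hdsumbase.congr; intro n; ring
    constructor
    · apply ((hdsum.mul_left κ).add (hkey t x hxx₀).1).congr
      intro n
      simp only [FPcoef]
      ring
    · have heq2 := (hkey t x hxx₀).2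
      calc ∑' n, (κ * deriv (Fn n) t + FPcoef Fn n t) / x ^ n
          = ∑' n, (κ * (deriv (Fn n) t / x ^ n) + FPcoef Fn n t / x ^ n) :=
            tsum_congr (fun n => by ring)
        _ = κ * (∑' n, deriv (Fn n) t / x ^ n) + ∑' n, FPcoef Fn n t / x ^ n := by
            rw [Summable.tsum_add (hdsum.mul_left κ) (hkey t x hxx₀).1, tsum_mul_left]
        _ = 0 := heq2
  -- negative case
  have nomain : ∀ t : ℝ, ¬(∃ x, x₀ < x ∧ Summable (fun n => deriv (Fn n) t / x ^ n)) →
      ∀ n, FPcoef Fn n t = 0 := by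
    intro t ht
    apply coeffs_zero' (x₁ := x₀) hx₀pos
    intro x hx
    refine ⟨(hkey t x hx).1, ?_⟩
    have hns : ¬ Summable (fun n => deriv (Fn n) t / x ^ n) := fun hs => ht ⟨x, hx, hs⟩
    have hA0 : ∑' n, deriv (Fn n) t / x ^ n = 0 := tsum_eq_zero_of_not_summable hns
    have heq2 := (hkey t x hx).2
    rw [hA0] at heq2
    simpa using heq2
  -- density
  have hdense : Dense {t : ℝ | ∃ x, x₀ < x ∧ Summable (fun n => deriv (Fn n) t / x ^ n)} := by
    rw [Metric.dense_iff]
    intro t ε hε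
    by_contra hne
    have hball : ∀ s, s ∈ Metric.ball t ε → ∀ n, FPcoef Fn n s = 0 := by
      intro s hs
      apply nomain
      intro hex
      exact hne ⟨s, Set.mem_inter hs hex⟩
    have hFz : ∀ s, s ∈ Metric.ball t ε → ∀ m, Fn (m+1) s = 0 :=
      fun s hs => hczero_imp s (hball s hs)
    have hdz : ∀ m, deriv (Fn (m+1)) t = 0 := by
      intro m
      have hev : Fn (m+1) =ᶠ[nhds t] (fun _ => 0) := by
        filter_upwards [Metric.ball_mem_nhds t hε] with s hs using hFz s hs m
      rw [hev.deriv_eq]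
      simp
    have hsum0 : Summable (fun n => deriv (Fn n) t / (x₀+1) ^ n) := by
      apply summable_of_ne_finset_zero (s := {0})
      intro n hn
      match n, hn with
      | (m+1), _ => rw [hdz m]; simp
    exact hne ⟨t, Set.mem_inter (Metric.mem_ball_self hε) ⟨x₀+1, by linarith, hsum0⟩⟩
  -- conclusion via continuity
  have key : ∀ n : ℕ, ∀ t : ℝ, κ * deriv (Fn n) t + FPcoef Fn n t = 0 := by
    intro n
    have hcont : Continuous (fun t => κ * deriv (Fn n) t + FPcoef Fn n t) := by
      apply Continuous.add
      · exact continuous_const.mul ((hFn n).continuous_deriv (by simp))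
      · unfold FPcoef
        apply Continuous.add
        · apply Continuous.sub
          · exact continuous_const.mul (hFn (n+1)).continuous
          · exact (continuous_const.mul continuous_id).mul (hFn (n-1)).continuous
        · exact (continuous_const.mul continuous_const).mul (hFn (n-2)).continuous
    have heqfun : (fun t => κ * deriv (Fn n) t + FPcoef Fn n t) = fun _ => 0 :=
      Continuous.ext_on hdense hcont continuous_const (fun t ht => main t ht n)
    intro t
    exact congrFun heqfun t
  -- extraction
  have h0inf : ContDiff ℝ ∞ (Fn 0) := (hFn 0).of_le (by simp)
  have hD1 : ContDiff ℝ ∞ (deriv (Fn 0)) := (contDiff_infty_iff_deriv.mp h0inf).2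
  have hD2 : ContDiff ℝ ∞ (deriv (deriv (Fn 0))) := (contDiff_infty_iff_deriv.mp hD1).2
  have hD1d : Differentiable ℝ (deriv (Fn 0)) := hD1.differentiable (by norm_num)
  have hD2d : Differentiable ℝ (deriv (deriv (Fn 0))) := hD2.differentiable (by norm_num)
  have h1 : ∀ t, Fn 1 t = -κ * deriv (Fn 0) t := by
    intro t
    have hk := key 0 t
    simp only [FPcoef] at hk
    norm_num at hk
    linarith
  have hF1 : Fn 1 = fun s => -κ * deriv (Fn 0) s := funext h1
  have hd1 : ∀ t, deriv (Fn 1) t = -κ * deriv (deriv (Fn 0)) t := by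
    intro t
    rw [hF1]
    exact deriv_const_mul _ (hD1d t)
  have h2 : ∀ t, Fn 2 t = κ^2/2 * deriv (deriv (Fn 0)) t := by
    intro t
    have hk := key 1 t
    simp only [FPcoef] at hk
    norm_num at hk
    rw [hd1 t] at hk
    linear_combination (1/2 : ℝ) * hk
  have hF2 : Fn 2 = fun s => κ^2/2 * deriv (deriv (Fn 0)) s := funext h2
  have hd2 : ∀ t, deriv (Fn 2) t = κ^2/2 * deriv (deriv (deriv (Fn 0))) t := by
    intro t
    rw [hF2]
    exact deriv_const_mul _ (hD2d t)
  have h3 : ∀ t, Fn 3 t = -(κ^3 * deriv (deriv (deriv (Fn 0))) t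
      + 2*t*κ*deriv (Fn 0) t)/6 := by
    intro t
    have hk := key 2 t
    simp only [FPcoef] at hk
    norm_num at hk
    rw [hd2 t, h1 t] at hk
    linear_combination (1/3 : ℝ) * hk
  intro t
  refine ⟨h1 t, h2 t, h3 t, ?_⟩
  intro n hn
  have hk := key n t
  have e1 : ((n-1 : ℕ):ℝ) = (n:ℝ)-1 := by
    rw [Nat.cast_sub (by omega)]
    norm_num
  have e2 : ((n-2 : ℕ):ℝ) = (n:ℝ)-2 := by
    rw [Nat.cast_sub (by omega)]
    norm_num
  simp only [FPcoef, e1, e2] at hk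
  linarith
end

section
/- Let r, q₂, q₁ be differentiable functions with 3q₂' = 2r(q₂²−1) + q₂q₁ and 3q₁' = 2r q₂ q₁ + q₁² + 2(t − r²) − 2r' q₂. Then r₁ = 2r q₂ + q₁ satisfies 3r₁' = r₁² + 4r' q₂ + 2(t − 3r²), provided r'' = 2r³ − 2tr − 1. -/
theorem stmt_16_general (r q₂ q₁ : ℝ → ℝ)
    (hrd : Differentiable ℝ r)
    (hq2d : Differentiable ℝ q₂) (hq1d : Differentiable ℝ q₁)
    (h17 : ∀ t, 3 * deriv q₂ t = 2 * r t * (q₂ t ^ 2 - 1) + q₂ t * q₁ t)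
    (h18 : ∀ t, 3 * deriv q₁ t = 2 * r t * q₂ t * q₁ t + q₁ t ^ 2
      + 2 * (t - r t ^ 2) - 2 * deriv r t * q₂ t) :
    ∀ t, 3 * deriv (fun s => 2 * r s * q₂ s + q₁ s) t
      = (2 * r t * q₂ t + q₁ t) ^ 2 + 4 * deriv r t * q₂ t
        + 2 * (t - 3 * r t ^ 2) := by
  intro t
  have hr₁ : HasDerivAt (fun s => 2 * r s * q₂ s + q₁ s)
      (2 * deriv r t * q₂ t + 2 * r t * deriv q₂ t + deriv q₁ t) t :=
    (((hrd t).hasDerivAt.const_mul 2).mul (hq2d t).hasDerivAt).add (hq1d t).hasDerivAt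
  rw [hr₁.deriv]
  linear_combination 2 * r t * h17 t + h18 t

/-- From equations (3.17)–(3.18), the combination `r₁ = 2rq₂ + q₁` satisfies
the Riccati-type equation (3.19), given that `r` solves
`r'' = 2r³ - 2tr - 1`. -/
theorem stmt_16 (r q₂ q₁ : ℝ → ℝ)
    (hrd : Differentiable ℝ r) (hrd2 : Differentiable ℝ (deriv r))
    (hq2d : Differentiable ℝ q₂) (hq1d : Differentiable ℝ q₁)
    (h17 : ∀ t, 3 * deriv q₂ t = 2 * r t * (q₂ t ^ 2 - 1) + q₂ t * q₁ t)
    (h18 : ∀ t, 3 * deriv q₁ t = 2 * r t * q₂ t * q₁ t + q₁ t ^ 2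
      + 2 * (t - r t ^ 2) - 2 * deriv r t * q₂ t)
    (hPII : ∀ t, deriv (deriv r) t = 2 * r t ^ 3 - 2 * t * r t - 1) :
    ∀ t, 3 * deriv (fun s => 2 * r s * q₂ s + q₁ s) t
      = (2 * r t * q₂ t + q₁ t) ^ 2 + 4 * deriv r t * q₂ t
        + 2 * (t - 3 * r t ^ 2) :=
  stmt_16_general r q₂ q₁ hrd hq2d hq1d h17 h18
end
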